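/- arXiv:1706.07064 — 9 statements merged into one kernel-verified Lean document; each statement's English description precedes it below -/
import Mathlib

section
/- A permutation π of {1,...,n} contains a subsequence of indices a < b < c < d with c = b+1 and max{π(a), π(c)} < min{π(b), π(d)} if and only if π contains indices a < b < c < d (with no adjacency condition) such that max{π(a), π(c)} < min{π(b), π(d)}. -/
/-- `l` is a permutation of `{1, ..., n}`, viewed as the sequence of its values. -/
def IsPermOf (l : List ℕ) (n : ℕ) : Prop := l.Perm (List.range' 1 n)

/-- `l` is B-avoiding: there are no indices `a < b < c < d` with
`max {l a, l c} < min {l b, l d}`. -/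
def BAvoid (l : List ℕ) : Prop :=
  ∀ a b c d : Fin l.length, a < b → b < c → c < d →
    ¬ (max (l.get a) (l.get c) < min (l.get b) (l.get d))

theorem stmt0 (n : ℕ) (π : List ℕ) (hπ : IsPermOf π n) :
    (∃ a b c d : Fin π.length, a < b ∧ b < c ∧ (c : ℕ) = (b : ℕ) + 1 ∧ c < d ∧
        max (π.get a) (π.get c) < min (π.get b) (π.get d)) ↔
    (∃ a b c d : Fin π.length, a < b ∧ b < c ∧ c < d ∧
        max (π.get a) (π.get c) < min (π.get b) (π.get d)) := by
  constructor
  · rintro ⟨a, b, c, d, hab, hbc, _, hcd, h⟩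
    exact ⟨a, b, c, d, hab, hbc, hcd, h⟩
  · rintro ⟨a, b, c, d, hab, hbc, hcd, h⟩
    suffices H : ∀ k : ℕ, ∀ a b c d : Fin π.length, a < b → b < c → c < d →
        (c : ℕ) - b = k → max (π.get a) (π.get c) < min (π.get b) (π.get d) →
        ∃ a b c d : Fin π.length, a < b ∧ b < c ∧ (c : ℕ) = (b : ℕ) + 1 ∧ c < d ∧
          max (π.get a) (π.get c) < min (π.get b) (π.get d) by
      exact H _ a b c d hab hbc hcd rfl h
    intro k
    induction k with
    | zero => intro a b c d hab hbc hcd hk h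
              exfalso; have := hbc; rw [Fin.lt_def] at this; omega
    | succ k ih =>
      intro a b c d hab hbc hcd hk h
      by_cases hcb : (c : ℕ) = (b : ℕ) + 1
      · exact ⟨a, b, c, d, hab, hbc, hcb, hcd, h⟩
      · have hb1 : (b : ℕ) + 1 < π.length := by
          have := c.isLt; have : (b : ℕ) + 1 < (c : ℕ) := by
            have := hbc; omega
          omega
        set m : Fin π.length := ⟨(b : ℕ) + 1, hb1⟩ with hm
        have hbm : b < m := by simp [hm, Fin.lt_def]
        have hmc : m < c := by
          simp only [hm, Fin.lt_def]; have := hbc; omega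
        by_cases hv : π.get m < min (π.get b) (π.get d)
        · exact ⟨a, b, m, d, hab, hbm, rfl, lt_trans hmc hcd, by
            simp only [lt_min_iff] at hv ⊢
            constructor
            · exact max_lt (lt_of_le_of_lt (le_max_left _ _) (lt_of_lt_of_le h (min_le_left _ _))) hv.1
            · exact max_lt (lt_of_le_of_lt (le_max_left _ _) (lt_of_lt_of_le h (min_le_right _ _))) hv.2⟩
        · push_neg at hv
          have hv' : max (π.get a) (π.get c) < π.get m := lt_of_lt_of_le h hv
          refine ih a m c d (lt_trans hab hbm) hmc hcd (by simp [hm]; omega) ?_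
          simp only [lt_min_iff]
          exact ⟨hv', lt_of_lt_of_le h (min_le_right _ _)⟩
end

section
/- If a permutation π of {1,...,n} contains indices a < b < c < d with max{π(a), π(c)} < min{π(b), π(d)}, and e is the largest index i < c such that π(i) > max{π(a), π(c)}, then the indices a < e < e+1 < d satisfy max{π(a), π(e+1)} < min{π(e), π(d)}. -/
theorem stmt1 (n : ℕ) (π : List ℕ) (hπ : IsPermOf π n)
    (a b c d e : Fin π.length)
    (hab : a < b) (hbc : b < c) (hcd : c < d)
    (hocc : max (π.get a) (π.get c) < min (π.get b) (π.get d))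
    (hec : e < c) (heval : max (π.get a) (π.get c) < π.get e)
    (hemax : ∀ i : Fin π.length, i < c → max (π.get a) (π.get c) < π.get i → i ≤ e) :
    ∃ e1 : Fin π.length, (e1 : ℕ) = (e : ℕ) + 1 ∧
      a < e ∧ e < e1 ∧ e1 < d ∧
      max (π.get a) (π.get e1) < min (π.get e) (π.get d) := by
  have hbe : b ≤ e := hemax b hbc (lt_of_lt_of_le hocc (min_le_left _ _))
  have he1len : (e : ℕ) + 1 < π.length := Nat.lt_of_le_of_lt hec c.isLt
  refine ⟨⟨(e : ℕ) + 1, he1len⟩, rfl, lt_of_lt_of_le hab hbe, by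
    simp [Fin.lt_def], lt_of_le_of_lt (show (⟨(e:ℕ)+1, he1len⟩ : Fin π.length) ≤ c from hec) hcd, ?_⟩
  have hae : π.get a < π.get e := lt_of_le_of_lt (le_max_left _ _) heval
  have had : π.get a < π.get d :=
    lt_of_le_of_lt (le_max_left _ _) (lt_of_lt_of_le hocc (min_le_right _ _))
  set e1 : Fin π.length := ⟨(e : ℕ) + 1, he1len⟩
  have he1 : π.get e1 ≤ max (π.get a) (π.get c) := by
    rcases lt_or_eq_of_le (show e1 ≤ c from hec) with h | h
    · by_contra hgt
      exact absurd (hemax e1 h (not_le.mp hgt)) (by simp [e1, Fin.le_def])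
    · rw [show e1 = c from h]; exact le_max_right _ _
  have h1 : π.get e1 < π.get e := lt_of_le_of_lt he1 heval
  have h2 : π.get e1 < π.get d :=
    lt_of_le_of_lt he1 (lt_of_lt_of_le hocc (min_le_right _ _))
  exact max_lt (lt_min hae had) (lt_min h1 h2)
end

section
/- If a permutation π of {1,...,n} (n ≥ 2) avoids all quadruples of indices a < b < c < d with max{π(a), π(c)} < min{π(b), π(d)}, then either the values 1 and 2 occur in adjacent positions of π, or the last value of π is 1 or 2. -/
/-! The positions `p < q` of the values 1 and 2 are the two smallest entries. If they were
neither adjacent nor was `q` the last position, the positions `p < p + 1 < q < last` would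
form a forbidden quadruple. -/

lemma List.eq_take_append_pair_append_drop {α : Type*} (l : List α) {p : ℕ}
    (hp : p + 1 < l.length) : l = l.take p ++ [l[p], l[p + 1]] ++ l.drop (p + 2) := by
  conv_lhs => rw [← List.take_append_drop p l,
    List.drop_eq_getElem_cons (by omega), List.drop_eq_getElem_cons hp]
  simp

namespace BAvoid

variable {l : List ℕ}

lemma eq_succ_or_eq_last (hB : BAvoid l) {p q : ℕ} (hpq : p < q) (hq : q < l.length)
    (hsmall : ∀ (k : ℕ) (hk : k < l.length), k ≠ p → k ≠ q →
      max l[p] l[q] < l[k]) :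
    q = p + 1 ∨ q = l.length - 1 := by
  by_contra! h
  have hb : p + 1 < q := by omega
  have hd : q < l.length - 1 := by omega
  refine hB ⟨p, by omega⟩ ⟨p + 1, by omega⟩ ⟨q, hq⟩ ⟨l.length - 1, by omega⟩
    (by simp) (by simpa using hb) (by simpa using hd) ?_
  simp only [List.get_eq_getElem]
  exact lt_min (hsmall _ _ (by omega) (by omega)) (hsmall _ _ (by omega) (by omega))

lemma adjacent_or_getLast (hB : BAvoid l) {p q : ℕ} (hpq : p < q) (hq : q < l.length)
    (hsmall : ∀ (k : ℕ) (hk : k < l.length), k ≠ p → k ≠ q →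
      max l[p] l[q] < l[k]) :
    (∃ s t : List ℕ, l = s ++ [l[p], l[q]] ++ t) ∨ l.getLast? = some l[q] := by
  rcases hB.eq_succ_or_eq_last hpq hq hsmall with rfl | rfl
  · exact Or.inl ⟨_, _, l.eq_take_append_pair_append_drop hq⟩
  · exact Or.inr (by simp [List.getLast?_eq_getElem?])

end BAvoid

theorem stmt2 (n : ℕ) (hn : 2 ≤ n) (π : List ℕ) (hπ : IsPermOf π n) (hB : BAvoid π) :
    (∃ l r : List ℕ, π = l ++ [1, 2] ++ r ∨ π = l ++ [2, 1] ++ r) ∨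
      π.getLast? = some 1 ∨ π.getLast? = some 2 := by
  have hnd : π.Nodup := hπ.nodup_iff.mpr List.nodup_range'
  have hmem : ∀ x, x ∈ π ↔ 1 ≤ x ∧ x < 1 + n := fun x => hπ.mem_iff.trans List.mem_range'_1
  obtain ⟨i, hi, h1⟩ := List.getElem_of_mem ((hmem 1).mpr (by omega))
  obtain ⟨j, hj, h2⟩ := List.getElem_of_mem ((hmem 2).mpr (by omega))
  have hsmall : ∀ (k : ℕ) (hk : k < π.length), k ≠ i → k ≠ j → 2 < π[k] := by
    intro k hk hki hkj
    have h1k : π[k] ≠ 1 := h1 ▸ mt (hnd.getElem_inj_iff).mp hki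
    have h2k : π[k] ≠ 2 := h2 ▸ mt (hnd.getElem_inj_iff).mp hkj
    have := ((hmem _).mp (List.getElem_mem hk)).1
    omega
  rcases lt_or_gt_of_ne (show i ≠ j by rintro rfl; omega) with hij | hji
  · rcases hB.adjacent_or_getLast hij hj (by simpa [h1, h2] using hsmall) with ⟨s, t, h⟩ | h
    · exact Or.inl ⟨s, t, Or.inl (by rwa [h1, h2] at h)⟩
    · exact Or.inr (Or.inr (h2 ▸ h))
  · rcases hB.adjacent_or_getLast hji hi
        (by simpa [h1, h2] using fun k hk hki hkj => hsmall k hk hkj hki) with ⟨s, t, h⟩ | h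
    · exact Or.inl ⟨s, t, Or.inr (by rwa [h1, h2] at h)⟩
    · exact Or.inr (Or.inl (h1 ▸ h))
end

section
/- Let σ be a B-avoiding permutation of {1,...,n-1}. Then the permutation obtained by increasing every value of σ by 1 and inserting the value 1 immediately before the position of the value 2 is a B-avoiding permutation of {1,...,n}. -/
/-- increase all values by 1 and insert `1` immediately before the value `2`. -/
def fBefore (σ : List ℕ) : List ℕ :=
  ((σ.map (· + 1)).take ((σ.map (· + 1)).idxOf 2)) ++
    1 :: ((σ.map (· + 1)).drop ((σ.map (· + 1)).idxOf 2))

/-- increase all values by 1 and insert `1` immediately after the value `2`. -/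
def fAfter (σ : List ℕ) : List ℕ :=
  ((σ.map (· + 1)).take ((σ.map (· + 1)).idxOf 2 + 1)) ++
    1 :: ((σ.map (· + 1)).drop ((σ.map (· + 1)).idxOf 2 + 1))

/-- increase all values by 1 and append `1` at the end. -/
def fEnd (σ : List ℕ) : List ℕ := σ.map (· + 1) ++ [1]

/-- increase all values by 1, replace the value `2` by `1`, and append `2` at the end. -/
def fBump (σ : List ℕ) : List ℕ :=
  (σ.map (· + 1)).map (fun x => if x = 2 then 1 else x) ++ [2]

theorem bAvoid_iff_sublist (l : List ℕ) :
    BAvoid l ↔ ∀ p q r s : ℕ, [p, q, r, s].Sublist l → ¬ max p r < min q s := by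
  constructor
  · intro hB p q r s hsub
    obtain ⟨is, his, hpw⟩ := List.sublist_eq_map_getElem hsub
    rcases is with _ | ⟨a, _ | ⟨b, _ | ⟨c, _ | ⟨d, _ | ⟨e, t⟩⟩⟩⟩⟩ <;>
      simp only [Fin.getElem_fin, List.map_cons, List.map_nil, List.cons.injEq, List.nil_eq,
        reduceCtorEq, List.cons_ne_self, and_false, and_true] at his
    obtain ⟨rfl, rfl, rfl, rfl⟩ := his
    simp only [List.pairwise_cons] at hpw
    exact hB a b c d (by simp_all) (by simp_all) (by simp_all)
  · intro h a b c d hab hbc hcd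
    have hsub := List.map_getElem_sublist (l := l) (is := [a, b, c, d]) (by
      simp [hab, hbc, hcd, hab.trans hbc, hbc.trans hcd, (hab.trans hbc).trans hcd])
    exact h _ _ _ _ (by simpa using hsub)

theorem BAvoid.map {l : List ℕ} {f : ℕ → ℕ} (hl : BAvoid l) (hf : StrictMono f) :
    BAvoid (l.map f) := by
  rw [bAvoid_iff_sublist] at hl ⊢
  intro p q r s hsub hlt
  obtain ⟨l', hl', hmap⟩ := List.sublist_map_iff.mp hsub
  rcases l' with _ | ⟨a, _ | ⟨b, _ | ⟨c, _ | ⟨d, _ | ⟨e, t⟩⟩⟩⟩⟩ <;>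
    simp only [List.map_cons, List.map_nil, List.cons.injEq, List.nil_eq, reduceCtorEq,
      List.cons_ne_self, and_false, and_true] at hmap
  obtain ⟨rfl, rfl, rfl, rfl⟩ := hmap
  simp only [max_lt_iff, lt_min_iff, hf.lt_iff_lt] at hlt
  exact hl a b c d hl' (by omega)

/-- The new minimum `x` can only play the role of `a` or `c` in a pattern, and then `m`, which
follows it, can take over that role. -/
theorem BAvoid.insert_before_min {A B : List ℕ} {x m : ℕ} (h : BAvoid (A ++ m :: B))
    (hx : x < m) (hm : ∀ y ∈ A ++ m :: B, m ≤ y) : BAvoid (A ++ x :: m :: B) := by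
  rw [bAvoid_iff_sublist] at h ⊢
  have hA : ∀ y ∈ A, m ≤ y := fun y hy => hm y (List.mem_append_left _ hy)
  have hB : ∀ y ∈ B, m ≤ y := fun y hy =>
    hm y (List.mem_append_right A (List.mem_cons_of_mem m hy))
  intro p q r s hsub hlt
  obtain ⟨l₁, l₂, hpat, hl₁, hl₂⟩ := List.sublist_append_iff.mp hsub
  rcases List.sublist_cons_iff.mp hl₂ with hl₂ | ⟨t, rfl, ht⟩
  · exact h p q r s (hpat ▸ hl₁.append hl₂) hlt
  rcases l₁ with _ | ⟨p', _ | ⟨q', _ | ⟨r', _ | ⟨s', l⟩⟩⟩⟩ <;>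
    simp only [List.cons_append, List.nil_append, List.cons.injEq, List.nil_eq,
      List.append_eq_nil_iff, reduceCtorEq, and_false] at hpat
  · obtain ⟨rfl, rfl⟩ := hpat
    rcases List.sublist_cons_iff.mp ht with ht | ⟨t', ht', ht'B⟩
    · have hr : m ≤ r := hB r (ht.subset (by simp))
      exact h m q r s ((List.nil_sublist A).append (ht.cons_cons m)) (by omega)
    · obtain ⟨hq, rfl⟩ := List.cons_eq_cons.mp ht'
      have hr : m ≤ r := hB r (ht'B.subset (by simp))
      omega
  · obtain ⟨rfl, rfl, -⟩ := hpat
    have hp : m ≤ p := hA p (hl₁.subset (by simp))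
    omega
  · obtain ⟨rfl, rfl, rfl, rfl⟩ := hpat
    have hp : m ≤ p := hA p (hl₁.subset (by simp))
    rcases List.sublist_cons_iff.mp ht with ht | ⟨t', ht', -⟩
    · exact h p q m s (hl₁.append (ht.cons_cons m)) (by omega)
    · obtain ⟨hs, -⟩ := List.cons_eq_cons.mp ht'
      omega
  · obtain ⟨rfl, rfl, rfl, rfl, -⟩ := hpat
    have hp : m ≤ p := hA p (hl₁.subset (by simp))
    omega

theorem List.drop_idxOf_eq_cons {α : Type*} [BEq α] [LawfulBEq α] {l : List α} {a : α}
    (h : a ∈ l) :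
    l.drop (l.idxOf a) = a :: l.drop (l.idxOf a + 1) := by
  have hlt := List.idxOf_lt_length_iff.mpr h
  rw [List.drop_eq_getElem_cons hlt, List.getElem_idxOf hlt]

theorem isPermOf_fBefore {σ : List ℕ} {m : ℕ} (h : IsPermOf σ m) :
    IsPermOf (fBefore σ) (m + 1) := by
  have hshift : (List.range' 1 m).map (· + 1) = List.range' 2 m := List.range'_succ_left.symm
  have hrange : List.range' 1 (m + 1) = 1 :: List.range' 2 m := by simp [List.range'_succ]
  unfold IsPermOf fBefore
  rw [hrange]
  refine List.perm_middle.trans ?_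
  rw [List.take_append_drop]
  exact (hshift ▸ h.map (· + 1)).cons 1

theorem bAvoid_fBefore {σ : List ℕ} (h : BAvoid σ) (h1 : 1 ∈ σ) (hpos : ∀ y ∈ σ, 1 ≤ y) :
    BAvoid (fBefore σ) := by
  set τ := σ.map (· + 1)
  have h2 : 2 ∈ τ := List.mem_map.mpr ⟨1, h1, rfl⟩
  have hτ : τ = τ.take (τ.idxOf 2) ++ 2 :: τ.drop (τ.idxOf 2 + 1) := by
    rw [← List.drop_idxOf_eq_cons h2, List.take_append_drop]
  have hmin : ∀ y ∈ τ, 2 ≤ y := by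
    simp only [τ, List.mem_map, forall_exists_index, and_imp, forall_apply_eq_imp_iff₂]
    exact fun y hy => Nat.succ_le_succ (hpos y hy)
  have hτB : BAvoid τ := h.map fun _ _ => Nat.succ_lt_succ
  rw [hτ] at hτB hmin
  rw [fBefore, List.drop_idxOf_eq_cons h2]
  exact hτB.insert_before_min (by norm_num) hmin

theorem stmt3 (n : ℕ) (hn : 2 ≤ n) (σ : List ℕ)
    (hσ : IsPermOf σ (n - 1)) (hB : BAvoid σ) :
    IsPermOf (fBefore σ) n ∧ BAvoid (fBefore σ) := by
  have hmem : ∀ y, y ∈ σ ↔ 1 ≤ y ∧ y < n := fun y => by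
    rw [hσ.mem_iff, List.mem_range'_1]
    omega
  refine ⟨Nat.sub_add_cancel (by omega : 1 ≤ n) ▸ isPermOf_fBefore hσ, ?_⟩
  exact bAvoid_fBefore hB ((hmem 1).mpr ⟨le_rfl, hn⟩) fun y hy => ((hmem y).mp hy).1
end

section
/- Let σ be a B-avoiding permutation of {1,...,n-1}. Then the permutation obtained by increasing every value of σ by 1 and inserting the value 1 immediately after the position of the value 2 is a B-avoiding permutation of {1,...,n}. -/
theorem List.insertIdx_eq_take_append_cons_drop {α : Type*} (l : List α) (x : α) {i : ℕ}
    (hi : i ≤ l.length) : l.insertIdx i x = l.take i ++ x :: l.drop i := by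
  induction l generalizing i with
  | nil => simp_all
  | cons y l ih =>
    cases i with
    | zero => simp
    | succ i => simp [List.insertIdx_succ_cons, ih (by simpa using hi)]

theorem IsPermOf.cons_one_map_succ {σ : List ℕ} {m : ℕ} (h : IsPermOf σ m) :
    IsPermOf (1 :: σ.map (· + 1)) (m + 1) := by
  unfold IsPermOf
  rw [List.range'_succ]
  exact List.range'_succ_left (s := 1) ▸ (h.map _).cons 1

theorem IsPermOf.one_le {σ : List ℕ} {m : ℕ} (h : IsPermOf σ m) {x : ℕ} (hx : x ∈ σ) :
    1 ≤ x :=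
  (List.mem_range'_1.1 (h.mem_iff.1 hx)).1

namespace BAvoid

theorem not_lt {l : List ℕ} (h : BAvoid l) {a b c d : ℕ} (hab : a < b) (hbc : b < c)
    (hcd : c < d) (hd : d < l.length) :
    ¬ max (l[a]'(by omega)) (l[c]'(by omega)) < min (l[b]'(by omega)) l[d] :=
  h ⟨a, _⟩ ⟨b, _⟩ ⟨c, _⟩ ⟨d, hd⟩ hab hbc hcd

theorem map_of_strictMono {l : List ℕ} (h : BAvoid l) {f : ℕ → ℕ} (hf : StrictMono f) :
    BAvoid (l.map f) := by
  rintro ⟨a, ha⟩ ⟨b, hb⟩ ⟨c, hc⟩ ⟨d, hd⟩ hab hbc hcd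
  simp only [List.length_map] at ha hb hc hd
  simp only [List.get_eq_getElem, List.getElem_map, ← hf.monotone.map_max,
    ← hf.monotone.map_min, hf.lt_iff_lt]
  exact h.not_lt hab hbc hcd hd

theorem insertIdx_succ_of_le {τ : List ℕ} (hτ : BAvoid τ) {k x : ℕ} (hk : k < τ.length)
    (hmin : ∀ y ∈ τ, τ[k] ≤ y) (hx : x ≤ τ[k]) : BAvoid (τ.insertIdx (k + 1) x) := by
  set L := τ.insertIdx (k + 1) x
  have hlen : L.length = τ.length + 1 := List.length_insertIdx_of_le_length hk x
  -- `f` sends a position of `L` to the position of `τ` it comes from; the new entry goes to `k`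
  let f : ℕ → ℕ := fun j => if j ≤ k then j else j - 1
  have hf : ∀ j < L.length, f j < τ.length := by
    intro j hj; simp only [f]; split_ifs <;> omega
  have hval : ∀ j (hj : j < L.length), j ≠ k + 1 → L[j] = τ[f j]'(hf j hj) := by
    intro j hj hne
    rcases Nat.lt_or_gt_of_ne hne with hlt | hgt
    · simp only [L, List.getElem_insertIdx_of_lt hlt, f, if_pos (Nat.le_of_lt_succ hlt)]
    · simp only [L, List.getElem_insertIdx_of_gt hgt, f, if_neg (by omega : ¬ j ≤ k)]
  have hge : ∀ j (hj : j < L.length), j ≠ k + 1 → τ[k] ≤ L[j] := fun j hj hne =>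
    hval j hj hne ▸ hmin _ (List.getElem_mem _)
  have hnew : ∀ (hj : k + 1 < L.length), L[k + 1] = x := List.getElem_insertIdx_self
  have hfk : f (k + 1) = k := by simp [f]
  rintro ⟨a, ha⟩ ⟨b, hb⟩ ⟨c, hc⟩ ⟨d, hd⟩ hab hbc hcd hpat
  simp only [List.get_eq_getElem, Fin.mk_lt_mk] at hab hbc hcd hpat
  have hbk : b ≠ k + 1 := by
    rintro rfl; have := hge a ha (by omega); have := hnew hb; omega
  have hdk : d ≠ k + 1 := by
    rintro rfl; have := hge a ha (by omega); have := hnew hd; omega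
  have hfbc : f b < f c := by
    by_contra hcon
    obtain rfl : b = k := by simp only [f] at hcon; split_ifs at hcon <;> omega
    have := hge a ha (by omega)
    have := hval b hb hbk
    simp only [f, le_refl, if_true] at this
    omega
  have hfa : τ[f a]'(hf a ha) ≤ max L[a] L[c] := by
    by_cases hak : a = k + 1
    · simp only [hak, hfk]; exact le_max_of_le_right (hge c hc (by omega))
    · exact hval a ha hak ▸ le_max_left _ _
  have hfc : τ[f c]'(hf c hc) ≤ max L[a] L[c] := by
    by_cases hck : c = k + 1
    · simp only [hck, hfk]; exact le_max_of_le_left (hge a ha (by omega))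
    · exact hval c hc hck ▸ le_max_right _ _
  refine hτ.not_lt (a := f a) (b := f b) (c := f c) ?_ hfbc ?_ (hf d hd) ?_
  · simp only [f]; split_ifs <;> omega
  · simp only [f]; split_ifs <;> omega
  · rw [← hval b hb hbk, ← hval d hd hdk]
    exact lt_of_le_of_lt (max_le hfa hfc) hpat

end BAvoid

theorem stmt4 (n : ℕ) (hn : 2 ≤ n) (σ : List ℕ)
    (hσ : IsPermOf σ (n - 1)) (hB : BAvoid σ) :
    IsPermOf (fAfter σ) n ∧ BAvoid (fAfter σ) := by
  set τ := σ.map (· + 1)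
  have h2 : 2 ∈ τ := List.mem_map_of_mem (hσ.mem_iff.2 (List.mem_range'_1.2 ⟨le_rfl, by omega⟩))
  have hk : τ.idxOf 2 < τ.length := List.idxOf_lt_length_iff.2 h2
  have hmin : ∀ y ∈ τ, τ[τ.idxOf 2] ≤ y := by
    rw [List.getElem_idxOf hk, List.forall_mem_map]
    exact fun z hz => Nat.succ_le_succ (hσ.one_le hz)
  have hτ : BAvoid τ := hB.map_of_strictMono fun _ _ h => Nat.add_lt_add_right h 1
  rw [show fAfter σ = τ.insertIdx (τ.idxOf 2 + 1) 1 from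
    (List.insertIdx_eq_take_append_cons_drop _ _ hk).symm]
  refine ⟨?_, hτ.insertIdx_succ_of_le hk hmin (by simp)⟩
  have hn' : n = n - 1 + 1 := by omega
  exact hn' ▸ (List.perm_insertIdx 1 τ hk).trans hσ.cons_one_map_succ
end

section
/- Let σ be a B-avoiding permutation of {1,...,n-1}. Then the permutation obtained by increasing every value of σ by 1 and appending the value 1 at the end is a B-avoiding permutation of {1,...,n}. -/
theorem IsPermOf.fEnd_succ {σ : List ℕ} {n : ℕ} (hσ : IsPermOf σ n) :
    IsPermOf (fEnd σ) (n + 1) := by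
  have hshift : (List.range' 1 n).map (· + 1) = List.range' 2 n := List.range'_succ_left.symm
  have hperm : (fEnd σ).Perm (1 :: List.range' 2 n) :=
    hshift ▸ ((hσ.map _).append_right [1]).trans (List.perm_append_singleton 1 _)
  simpa [IsPermOf, List.range'_succ] using hperm

theorem BAvoid.map_of_strictMono_s5 {f : ℕ → ℕ} (hf : StrictMono f) {l : List ℕ} (hl : BAvoid l) :
    BAvoid (l.map f) := by
  intro a b c d hab hbc hcd h
  have hlen : (l.map f).length = l.length := l.length_map f
  refine hl (a.cast hlen) (b.cast hlen) (c.cast hlen) (d.cast hlen) hab hbc hcd ?_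
  simp only [List.get_eq_getElem, List.getElem_map, ← hf.monotone.map_max,
    ← hf.monotone.map_min, hf.lt_iff_lt] at h
  exact h

theorem BAvoid.append_singleton_of_le {l : List ℕ} {v : ℕ} (hl : BAvoid l)
    (hv : ∀ x ∈ l, v ≤ x) : BAvoid (l ++ [v]) := by
  intro a b c d hab hbc hcd h
  have hd : (d : ℕ) < l.length + 1 := by simpa using d.isLt
  have get_of_lt : ∀ i : Fin (l ++ [v]).length, (hi : (i : ℕ) < l.length) →
      (l ++ [v]).get i = l[(i : ℕ)] := fun i hi => List.getElem_append_left hi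
  have ha : (a : ℕ) < l.length := by omega
  have hc : (c : ℕ) < l.length := by omega
  rcases Nat.lt_or_ge d l.length with hd' | hd'
  · refine hl ⟨a, ha⟩ ⟨b, by omega⟩ ⟨c, hc⟩ ⟨d, hd'⟩ hab hbc hcd ?_
    rwa [get_of_lt a ha, get_of_lt b (by omega), get_of_lt c hc, get_of_lt d hd'] at h
  · -- the appended value `v` is a minimum, so it cannot play the role of `l d`
    have hlast : (l ++ [v]).get d = v := by simp [show (d : ℕ) = l.length by omega]
    have hva : v ≤ l[(a : ℕ)] := hv _ (List.getElem_mem ha)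
    rw [hlast, get_of_lt a ha] at h
    omega

theorem stmt5 (n : ℕ) (hn : 1 ≤ n) (σ : List ℕ)
    (hσ : IsPermOf σ (n - 1)) (hB : BAvoid σ) :
    IsPermOf (fEnd σ) n ∧ BAvoid (fEnd σ) := by
  refine ⟨Nat.sub_add_cancel hn ▸ hσ.fEnd_succ, ?_⟩
  refine (hB.map_of_strictMono_s5 fun _ _ h => Nat.add_lt_add_right h 1).append_singleton_of_le ?_
  simp
end

section
/- Let π be a B-avoiding permutation of {1,...,n} whose last value is 2, and let π'' be the permutation of {1,...,n-1} obtained from π by deleting the value 1, moving the value 2 to the position previously occupied by 1, and decreasing every value by 1. Then π'' is B-avoiding, and applying to π'' the map that increases all values by 1, replaces the value 2 by 1, and appends 2 at the end recovers π. -/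
/-!
Deleting the final `2` and merging the values `1` and `2` is the monotone relabelling
`mergeOneTwo` applied to a subsequence of `π`. B-avoidance passes to subsequences, and it is
preserved by monotone relabellings because a monotone map reflects strict inequalities. The
inverse `fBump` only has to separate `1` from `2` again, which it can since `2` was the last entry.
-/

theorem BAvoid.sublist {l₁ l₂ : List ℕ} (h : l₁.Sublist l₂) (hB : BAvoid l₂) : BAvoid l₁ := by
  obtain ⟨f, hf⟩ := List.sublist_iff_exists_fin_orderEmbedding_get_eq.mp h
  intro a b c d hab hbc hcd
  simpa only [hf] using hB (f a) (f b) (f c) (f d) (f.strictMono hab) (f.strictMono hbc)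
    (f.strictMono hcd)

theorem BAvoid.map_of_monotone {l : List ℕ} {f : ℕ → ℕ} (hf : Monotone f) (hB : BAvoid l) :
    BAvoid (l.map f) := by
  intro a b c d hab hbc hcd hpat
  let e := Fin.cast (l.length_map f)
  refine hB (e a) (e b) (e c) (e d) hab hbc hcd ?_
  simp only [List.get_eq_getElem, List.getElem_map, max_lt_iff, lt_min_iff] at hpat ⊢
  obtain ⟨⟨hab', had'⟩, hcb', hcd'⟩ := hpat
  exact ⟨⟨hf.reflect_lt hab', hf.reflect_lt had'⟩, hf.reflect_lt hcb', hf.reflect_lt hcd'⟩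

def mergeOneTwo (x : ℕ) : ℕ := (if x = 1 then 2 else x) - 1

theorem map_ite_map_sub_one_eq_map_mergeOneTwo (l : List ℕ) :
    (l.map (fun x => if x = 1 then 2 else x)).map (· - 1) = l.map mergeOneTwo :=
  List.map_map

theorem monotone_mergeOneTwo : Monotone mergeOneTwo := by
  intro x y hxy
  unfold mergeOneTwo
  split_ifs <;> omega

theorem map_mergeOneTwo_range' (m : ℕ) :
    (1 :: List.range' 3 m).map mergeOneTwo = List.range' 1 (m + 1) := by
  have hsub : (List.range' 3 m).map mergeOneTwo = (List.range' 3 m).map (· - 1) :=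
    List.map_congr_left fun x hx => by
      rw [List.mem_range'_1] at hx
      simp only [mergeOneTwo, if_neg (show x ≠ 1 by omega)]
  rw [List.range'_succ, List.map_cons, hsub, List.map_sub_range' (by norm_num)]
  rfl

theorem perm_of_append_two_perm_range' {L : List ℕ} {m : ℕ}
    (h : (L ++ [2]).Perm (List.range' 1 (m + 2))) : L.Perm (1 :: List.range' 3 m) := by
  rw [List.range'_succ, List.range'_succ] at h
  exact (List.perm_cons 2).mp ((List.perm_append_singleton 2 L).symm.trans (h.trans (.swap 2 1 _)))

theorem fBump_map_mergeOneTwo {L : List ℕ} (hL : ∀ x ∈ L, x = 1 ∨ 3 ≤ x) :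
    fBump (L.map mergeOneTwo) = L ++ [2] := by
  rw [fBump, List.map_map, List.map_map]
  congr 1
  refine (List.map_congr_left fun x hx => ?_).trans (List.map_id L)
  have hx' := hL x hx
  simp only [Function.comp_apply, mergeOneTwo, id]
  split_ifs <;> omega

theorem stmt8_general (n : ℕ) (π : List ℕ)
    (hπ : IsPermOf π n) (hB : BAvoid π)
    (hlast : π.getLast? = some 2) :
    IsPermOf ((π.dropLast.map (fun x => if x = 1 then 2 else x)).map (· - 1)) (n - 1) ∧
    BAvoid ((π.dropLast.map (fun x => if x = 1 then 2 else x)).map (· - 1)) ∧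
    fBump ((π.dropLast.map (fun x => if x = 1 then 2 else x)).map (· - 1)) = π := by
  have hsplit : π.dropLast ++ [2] = π := List.dropLast_append_getLast? 2 hlast
  obtain ⟨m, rfl⟩ : ∃ m, n = m + 2 := by
    have h2 : 2 ∈ List.range' 1 n := hπ.mem_iff.mp (List.mem_of_getLast? hlast)
    rw [List.mem_range'_1] at h2
    exact ⟨n - 2, by omega⟩
  have hL : π.dropLast.Perm (1 :: List.range' 3 m) :=
    perm_of_append_two_perm_range' (by rwa [hsplit])
  rw [map_ite_map_sub_one_eq_map_mergeOneTwo]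
  refine ⟨?_, (hB.sublist π.dropLast_sublist).map_of_monotone monotone_mergeOneTwo, ?_⟩
  · show (π.dropLast.map mergeOneTwo).Perm (List.range' 1 (m + 1))
    rw [← map_mergeOneTwo_range']
    exact hL.map mergeOneTwo
  · refine (fBump_map_mergeOneTwo fun x hx => ?_).trans hsplit
    have hx' := hL.mem_iff.mp hx
    simp only [List.mem_cons, List.mem_range'_1] at hx'
    omega

theorem stmt8 (n : ℕ) (hn : 2 ≤ n) (π : List ℕ)
    (hπ : IsPermOf π n) (hB : BAvoid π)
    (hlast : π.getLast? = some 2) :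
    IsPermOf ((π.dropLast.map (fun x => if x = 1 then 2 else x)).map (· - 1)) (n - 1) ∧
    BAvoid ((π.dropLast.map (fun x => if x = 1 then 2 else x)).map (· - 1)) ∧
    fBump ((π.dropLast.map (fun x => if x = 1 then 2 else x)).map (· - 1)) = π :=
  stmt8_general n π hπ hB hlast
end

section
/- For n ≥ 3, the map g sending a permutation to the permutation obtained by deleting the values 1 and 2 and decreasing all remaining values by 2 restricts to a 2-to-1 surjection from the set of B-avoiding permutations of {1,...,n} ending in 12 or 21 onto the set of B-avoiding permutations of {1,...,n-2}; hence the number of B-avoiding permutations of {1,...,n} whose last two values are {1,2} equals twice the number of B-avoiding permutations of {1,...,n-2}. -/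
/-- delete the values 1 and 2 and decrease all remaining values by 2. -/
def gMap (π : List ℕ) : List ℕ := ((π.erase 1).erase 2).map (· - 2)

/-!
A permutation of `{1, ..., n}` ending in `12` or `21` is `σ + 2` followed by that pair, with `σ`
a permutation of `{1, ..., n - 2}` and `g π = σ`. The last two entries cannot take part in an
occurrence of the pattern: its last entry `d` would have to exceed the first entry `a`, but every
value of the pair lies below every earlier value. So `π` is B-avoiding iff `σ` is, and
`π ↦ (g π, last two entries)` is a bijection onto `{σ B-avoiding} × {12, 21}`.
-/

open List

theorem bavoid_iff_getElem (l : List ℕ) : BAvoid l ↔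
    ∀ a b c d (_ : a < b) (_ : b < c) (_ : c < d) (hd : d < l.length),
      ¬ (l[a] < l[b] ∧ l[c] < l[b] ∧ l[a] < l[d] ∧ l[c] < l[d]) := by
  simp only [BAvoid, Fin.forall_iff, Fin.mk_lt_mk, get_eq_getElem, max_lt_iff, lt_min_iff]
  constructor
  · intro H a b c d hab hbc hcd hd
    simpa [and_assoc] using H a (by omega) b (by omega) c (by omega) d hd hab hbc hcd
  · intro H a _ b _ c _ d hd hab hbc hcd
    simpa [and_assoc] using H a b c d hab hbc hcd hd

theorem bavoid_map_iff {l : List ℕ} {f : ℕ → ℕ} (hf : StrictMonoOn f {x | x ∈ l}) :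
    BAvoid (l.map f) ↔ BAvoid l := by
  have hlt : ∀ i j (hi : i < l.length) (hj : j < l.length), f l[i] < f l[j] ↔ l[i] < l[j] :=
    fun i j hi hj => hf.lt_iff_lt (getElem_mem hi) (getElem_mem hj)
  simp only [bavoid_iff_getElem, length_map, getElem_map, hlt]

theorem bavoid_append_iff {l s : List ℕ} (hs : s.length ≤ 2) (hle : ∀ x ∈ s, ∀ y ∈ l, x ≤ y) :
    BAvoid (l ++ s) ↔ BAvoid l := by
  simp only [bavoid_iff_getElem, length_append]
  constructor
  · intro H a b c d hab hbc hcd hd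
    simpa [getElem_append_left, hd, show a < l.length by omega, show b < l.length by omega,
      show c < l.length by omega] using H a b c d hab hbc hcd (by omega)
  · intro H a b c d hab hbc hcd hd
    by_cases hdl : d < l.length
    · simpa [getElem_append_left, hdl, show a < l.length by omega,
        show b < l.length by omega, show c < l.length by omega] using H a b c d hab hbc hcd hdl
    · have ha : a < l.length := by omega
      have := hle _ (getElem_mem (l := s) (n := d - l.length) (by omega)) _ (getElem_mem ha)
      simp only [getElem_append_left ha, getElem_append_right (show l.length ≤ d by omega)]
      omega

theorem range'_one_eq_append {n : ℕ} (hn : 2 ≤ n) : range' 1 n = [1, 2] ++ range' 3 (n - 2) := by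
  obtain ⟨k, rfl⟩ := Nat.exists_eq_add_of_le' hn
  simp [range'_succ]

theorem isPermOf_append_iff {l t : List ℕ} {n : ℕ} (hn : 2 ≤ n) (ht : t.Perm [1, 2]) :
    IsPermOf (l ++ t) n ↔ l.Perm (range' 3 (n - 2)) := by
  rw [IsPermOf, range'_one_eq_append hn]
  exact (perm_append_comm.trans (ht.append_right l)).congr_left _ |>.trans (perm_append_left_iff _)

def oneTwoEndings : Set (List ℕ) := {[1, 2], [2, 1]}

def shiftAppend (p : List ℕ × List ℕ) : List ℕ := p.1.map (· + 2) ++ p.2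

theorem perm_of_mem_oneTwoEndings {t : List ℕ} (ht : t ∈ oneTwoEndings) : t.Perm [1, 2] := by
  rcases ht with rfl | rfl
  exacts [Perm.refl _, Perm.swap 1 2 []]

theorem oneTwoEndings_ncard : oneTwoEndings.ncard = 2 :=
  Set.ncard_pair (by decide)

theorem isPermOf_shiftAppend_iff {n : ℕ} (hn : 2 ≤ n) {τ t : List ℕ} (ht : t ∈ oneTwoEndings) :
    IsPermOf (shiftAppend (τ, t)) n ↔ IsPermOf τ (n - 2) := by
  have hshift : (range' 1 (n - 2)).map (· + 2) = range' 3 (n - 2) := by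
    simpa [Nat.add_comm] using map_add_range' (a := 2) 1 (n - 2) 1
  rw [shiftAppend, isPermOf_append_iff hn (perm_of_mem_oneTwoEndings ht), IsPermOf, ← hshift,
    map_perm_map_iff (add_left_injective 2)]

theorem bavoid_shiftAppend_iff {τ t : List ℕ} (ht : t ∈ oneTwoEndings) :
    BAvoid (shiftAppend (τ, t)) ↔ BAvoid τ := by
  have hperm := perm_of_mem_oneTwoEndings ht
  simp only [shiftAppend]
  rw [bavoid_append_iff hperm.length_eq.le, bavoid_map_iff fun x _ y _ hxy => by omega]
  simp only [mem_map]
  rintro x hx _ ⟨y, _, rfl⟩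
  have : x = 1 ∨ x = 2 := by simpa using hperm.subset hx
  omega

theorem IsPermOf.zero_notMem {τ : List ℕ} {k : ℕ} (h : IsPermOf τ k) : 0 ∉ τ := fun h0 =>
  absurd (mem_range'_1.mp (h.subset h0)).1 (by decide)

theorem gMap_shiftAppend {τ t : List ℕ} (h0 : 0 ∉ τ) (ht : t ∈ oneTwoEndings) :
    gMap (shiftAppend (τ, t)) = τ := by
  have h1 : 1 ∉ τ.map (· + 2) := by simp
  have h2 : 2 ∉ τ.map (· + 2) := by simpa using h0
  rcases ht with rfl | rfl <;>
    simp [gMap, shiftAppend, erase_append_right _ h1, erase_append_right _ h2, Function.comp_def]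

theorem shiftAppend_injOn (s : Set (List ℕ)) : Set.InjOn shiftAppend (s ×ˢ oneTwoEndings) := by
  rintro ⟨τ, t⟩ ⟨-, ht⟩ ⟨τ', t'⟩ ⟨-, ht'⟩ h
  dsimp only [shiftAppend] at h ht ht'
  obtain ⟨hτ, rfl⟩ := append_inj' h
    ((perm_of_mem_oneTwoEndings ht).length_eq.trans (perm_of_mem_oneTwoEndings ht').length_eq.symm)
  rw [map_injective_iff.mpr (add_left_injective 2) hτ]

theorem mem_image_shiftAppend_iff {n : ℕ} (hn : 2 ≤ n) (π : List ℕ) :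
    (IsPermOf π n ∧ BAvoid π ∧ ∃ l : List ℕ, π = l ++ [1, 2] ∨ π = l ++ [2, 1]) ↔
      π ∈ shiftAppend '' ({τ | IsPermOf τ (n - 2) ∧ BAvoid τ} ×ˢ oneTwoEndings) := by
  constructor
  · rintro ⟨hp, hb, l, hπ⟩
    obtain ⟨t, ht, rfl⟩ : ∃ t ∈ oneTwoEndings, π = l ++ t := by
      rcases hπ with rfl | rfl
      exacts [⟨_, Or.inl rfl, rfl⟩, ⟨_, Or.inr rfl, rfl⟩]
    -- every entry of `l` is at least 3, so `l` is the shift of `l.map (· - 2)`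
    have hl : shiftAppend (l.map (· - 2), t) = l ++ t := by
      have hge := ((isPermOf_append_iff hn (perm_of_mem_oneTwoEndings ht)).mp hp).subset
      suffices l.map ((· + 2) ∘ (· - 2)) = l by simpa [shiftAppend, map_map]
      refine (map_congr_left fun x hx => ?_).trans (map_id l)
      have := mem_range'_1.mp (hge hx)
      simp only [Function.comp_apply, id]
      omega
    rw [← hl] at hp hb ⊢
    exact ⟨_, ⟨⟨(isPermOf_shiftAppend_iff hn ht).mp hp, (bavoid_shiftAppend_iff ht).mp hb⟩, ht⟩,
      rfl⟩
  · rintro ⟨⟨τ, t⟩, ⟨⟨hp, hb⟩, ht⟩, rfl⟩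
    refine ⟨(isPermOf_shiftAppend_iff hn ht).mpr hp, (bavoid_shiftAppend_iff ht).mpr hb, τ.map (· + 2), ?_⟩
    rcases ht with rfl | rfl
    exacts [Or.inl rfl, Or.inr rfl]

theorem stmt11 (n : ℕ) (hn : 3 ≤ n) :
    (∀ π : List ℕ, IsPermOf π n → BAvoid π →
      (∃ l : List ℕ, π = l ++ [1, 2] ∨ π = l ++ [2, 1]) →
      IsPermOf (gMap π) (n - 2) ∧ BAvoid (gMap π)) ∧
    (∀ τ : List ℕ, IsPermOf τ (n - 2) → BAvoid τ →
      {π : List ℕ | IsPermOf π n ∧ BAvoid π ∧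
        (∃ l : List ℕ, π = l ++ [1, 2] ∨ π = l ++ [2, 1]) ∧ gMap π = τ}.ncard = 2) ∧
    {π : List ℕ | IsPermOf π n ∧ BAvoid π ∧
        (∃ l : List ℕ, π = l ++ [1, 2] ∨ π = l ++ [2, 1])}.ncard =
      2 * {τ : List ℕ | IsPermOf τ (n - 2) ∧ BAvoid τ}.ncard := by
  have hn2 : 2 ≤ n := by omega
  refine ⟨fun π hp hb hl => ?_, fun τ hp hb => ?_, ?_⟩
  · obtain ⟨⟨τ, t⟩, ⟨hτ, ht⟩, rfl⟩ := (mem_image_shiftAppend_iff hn2 π).mp ⟨hp, hb, hl⟩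
    rwa [gMap_shiftAppend hτ.1.zero_notMem ht]
  · have hfiber : {π : List ℕ | IsPermOf π n ∧ BAvoid π ∧
        (∃ l : List ℕ, π = l ++ [1, 2] ∨ π = l ++ [2, 1]) ∧ gMap π = τ} =
          shiftAppend '' ({τ} ×ˢ oneTwoEndings) := by
      ext π
      simp only [Set.mem_ofPred_eq, ← and_assoc, mem_image_shiftAppend_iff hn2]
      constructor
      · rintro ⟨⟨⟨τ', t⟩, ⟨⟨hτ', -⟩, ht⟩, rfl⟩, rfl⟩
        exact ⟨(τ', t), ⟨(gMap_shiftAppend hτ'.zero_notMem ht).symm, ht⟩, rfl⟩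
      · rintro ⟨⟨τ', t⟩, ⟨rfl, ht⟩, rfl⟩
        exact ⟨⟨_, ⟨⟨hp, hb⟩, ht⟩, rfl⟩, gMap_shiftAppend hp.zero_notMem ht⟩
    rw [hfiber, (shiftAppend_injOn _).ncard_image, Set.ncard_prod, oneTwoEndings_ncard,
      Set.ncard_singleton, one_mul]
  · simp only [mem_image_shiftAppend_iff hn2, Set.ofPred_mem_eq]
    rw [(shiftAppend_injOn _).ncard_image, Set.ncard_prod, oneTwoEndings_ncard, mul_comm]
end

section
/- For n ≥ 2, if a permutation π of {1,...,n} has no quadruple of indices a < b < c < d with c = b+1 and max{π(a), π(c)} < min{π(b), π(d)}, then π has no quadruple of indices a < b < c < d with max{π(a), π(c)} < min{π(b), π(d)}. -/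
lemma key14 (l : List ℕ) : ∀ k : ℕ, ∀ a b c d : Fin l.length, a < b → b < c → c < d →
    (c : ℕ) ≤ (b : ℕ) + k → max (l.get a) (l.get c) < min (l.get b) (l.get d) →
    ∃ a b c d : Fin l.length, a < b ∧ b < c ∧ (c : ℕ) = (b : ℕ) + 1 ∧ c < d ∧
        max (l.get a) (l.get c) < min (l.get b) (l.get d) := by
  intro k
  induction k with
  | zero =>
      intro a b c d hab hbc hcd hk hm
      exact absurd hbc (by omega)
  | succ k ih =>
      intro a b c d hab hbc hcd hk hm
      rcases eq_or_lt_of_le (Nat.succ_le_of_lt hbc) with heq | hlt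
      · exact ⟨a, b, c, d, hab, hbc, heq.symm, hcd, hm⟩
      · -- (b:ℕ)+1 < c
        have hmlt : (b : ℕ) + 1 < l.length := lt_trans hlt c.isLt
        set m : Fin l.length := ⟨(b : ℕ) + 1, hmlt⟩ with hmdef
        have hbm : b < m := by simp [Fin.lt_def, hmdef]
        have hmc : m < c := by simpa [Fin.lt_def, hmdef] using hlt
        by_cases hv : l.get m < min (l.get b) (l.get d)
        · exact ⟨a, b, m, d, hab, hbm, rfl, lt_trans hmc hcd, by
            simp only [max_lt_iff]
            exact ⟨lt_of_le_of_lt (le_max_left _ _) hm |>.trans_le (le_refl _), hv⟩⟩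
        · push_neg at hv
          apply ih a m c d (lt_trans hab hbm) hmc hcd (by omega)
          have h1 : max (l.get a) (l.get c) < l.get m := lt_of_lt_of_le hm hv
          have h2 : max (l.get a) (l.get c) < l.get d :=
            lt_of_lt_of_le hm (min_le_right _ _)
          exact lt_min h1 h2

theorem stmt14 (n : ℕ) (hn : 2 ≤ n) (π : List ℕ) (hπ : IsPermOf π n)
    (h : ¬ ∃ a b c d : Fin π.length, a < b ∧ b < c ∧ (c : ℕ) = (b : ℕ) + 1 ∧ c < d ∧
        max (π.get a) (π.get c) < min (π.get b) (π.get d)) :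
    BAvoid π := by
  intro a b c d hab hbc hcd hm
  exact h (key14 π ((c : ℕ) - (b : ℕ)) a b c d hab hbc hcd (by omega) hm)
end
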